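/- If I is a model of program P and I' ⊑ I, then Γ_P(I') ⊑ I. -/

import Mathlib

/-- Network formulas over labels `L`. -/
inductive Formula (L : Type) where
  | atom : L → Set ℝ → Formula L
  | and : Formula L → Formula L → Formula L
  | or : Formula L → Formula L → Formula L
  | not : Formula L → Formula L

/-- Satisfaction of a formula by a world (assignment of bounds to labels). -/
def Sat {L : Type} (W : L → Set ℝ) : Formula L → Prop
  | .atom l bnd =>
      bnd = Set.Icc 0 1 ∨ (bnd ≠ ∅ ∧ bnd ≠ Set.Icc 0 1 ∧ W l ⊆ bnd)
  | .and f g => Sat W f ∧ Sat W g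
  | .or f g => Sat W f ∨ Sat W g
  | .not f => ¬ Sat W f

/-- Negation-free formulas. -/
def NegFree {L : Type} : Formula L → Prop
  | .atom _ _ => True
  | .and f g => NegFree f ∧ NegFree g
  | .or f g => NegFree f ∧ NegFree g
  | .not _ => False

/-- Formulas mentioning only non-fluent labels. -/
def NonFluentFormula {L : Type} (fluent : L → Prop) : Formula L → Prop
  | .atom l _ => ¬ fluent l
  | .and f g => NonFluentFormula fluent f ∧ NonFluentFormula fluent g
  | .or f g => NonFluentFormula fluent f ∧ NonFluentFormula fluent g
  | .not f => NonFluentFormula fluent f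

/-- Components of the network: nodes and (directed) edges. -/
def Comp (V : Type) := V ⊕ (V × V)

/-- Network interpretations and interpretations. -/
def NetI (V L : Type) := Comp V → L → Set ℝ
def Interp (V L : Type) := ℕ → NetI V L

/-- `I ⊑ I'` iff every bound in `I'` is a subset of the corresponding bound in `I`. -/
def ile {V L : Type} (I I' : Interp V L) : Prop :=
  ∀ t c lab, I' t c lab ⊆ I t c lab

/-- A MANCaLog rule: head label, time offset, target criteria, neighbor
criteria `(gE, gN, h)` and an influence function. -/
structure Rule (L : Type) where
  head : L
  dt : ℕ
  tc : Formula L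
  gE : Formula L
  gN : Formula L
  h : Formula L
  ifl : ℕ → ℕ → Set ℝ

/-- A MANCaLog fact `(⟨lab,bnd⟩,c):[t1,t2]`. -/
structure MFact (V L : Type) where
  lab : L
  bnd : Set ℝ
  c : Comp V
  t1 : ℕ
  t2 : ℕ

/-- An integrity constraint `⟨lab,bnd⟩ ↩ body`. -/
structure IC (L : Type) where
  lab : L
  bnd : Set ℝ
  body : Formula L

/-- A MANCaLog program. -/
structure Program (V L : Type) where
  facts : List (MFact V L)
  ics : List (IC L)
  rules : List (Rule L)

/-- Eligible neighbors of `v` w.r.t. a rule `r` under network interpretation `NI`. -/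
def ELIG {V L : Type} (E : V → V → Prop) (NI : NetI V L) (v : V) (r : Rule L) :
    Set V :=
  {v' | E v' v ∧ Sat (NI (Sum.inl v')) r.gN ∧ Sat (NI (Sum.inr (v', v))) r.gE}

/-- Qualifying neighbors of `v` w.r.t. rule `r` under `NI`. -/
def QUAL {V L : Type} (E : V → V → Prop) (NI : NetI V L) (v : V) (r : Rule L) :
    Set V :=
  {v' ∈ ELIG E NI v r | Sat (NI (Sum.inl v')) r.h}

/-- `BOUND(r,v,NI) = ifl(|QUAL|,|ELIG|)`. -/
noncomputable def BOUND {V L : Type} (E : V → V → Prop) (NI : NetI V L)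
    (v : V) (r : Rule L) : Set ℝ :=
  r.ifl (QUAL E NI v r).ncard (ELIG E NI v r).ncard

/-- Target time set of `(I,v,r)`. -/
def TTS {V L : Type} (I : Interp V L) (v : V) (r : Rule L) : Set ℕ :=
  {t | Sat (I (t - r.dt) (Sum.inl v)) r.tc}

/-- `I` is a model of `P`: it satisfies all facts, integrity constraints and rules. -/
def Models {V L : Type} (E : V → V → Prop) (P : Program V L) (I : Interp V L) :
    Prop :=
  (∀ F ∈ P.facts, ∀ t : ℕ, F.t1 ≤ t → t ≤ F.t2 → I t F.c F.lab ⊆ F.bnd) ∧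
  (∀ ic ∈ P.ics, ∀ t c, Sat (I t c) ic.body → I t c ic.lab ⊆ ic.bnd) ∧
  (∀ r ∈ P.rules, ∀ v : V, ∀ t ∈ TTS I v r,
    I t (Sum.inl v) r.head ⊆ BOUND E (I (t - r.dt)) v r)

/-- The `Γ_P` operator: at each `(t,c,lab)` intersect the previous bound with
the applicable fact bounds, constraint bounds, and rule bounds. -/
noncomputable def Gamma {V L : Type} (E : V → V → Prop) (P : Program V L)
    (I : Interp V L) : Interp V L :=
  fun t c lab =>
    (I t c lab) ∩
    (⋂₀ {b | ∃ F ∈ P.facts, F.lab = lab ∧ F.c = c ∧ F.t1 ≤ t ∧ t ≤ F.t2 ∧ b = F.bnd}) ∩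
    (⋂₀ {b | ∃ ic ∈ P.ics, ic.lab = lab ∧ Sat (I t c) ic.body ∧ b = ic.bnd}) ∩
    (⋂₀ {b | ∃ r ∈ P.rules, ∃ v : V, c = Sum.inl v ∧ r.head = lab ∧
            t ∈ TTS I v r ∧ b = BOUND E (I (t - r.dt)) v r})

/- `I' ⊑ I` means every bound of `I` lies inside the corresponding bound of
`I'`, and `Γ_P(I')` intersects `I'` with fact, constraint and rule bounds, so `I` must lie inside
each of these. Facts hold in the model `I`. A negation-free constraint body that holds in the
looser `I'` also holds in `I`. For a rule, the target times and the eligible neighbours depend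
only on non-fluent labels, where `I` and `I'` agree, while under `I'` no more neighbours qualify
than under `I`; as the influence function is antitone in the number of qualifying neighbours,
the rule bound computed from `I'` contains the one computed from `I`, which contains `I`. -/

lemma sat_of_subset_of_negFree {L : Type} {W W' : L → Set ℝ} (hW : ∀ l, W l ⊆ W' l) :
    ∀ {f : Formula L}, NegFree f → Sat W' f → Sat W f
  | .atom _ _, _, .inl hfull => .inl hfull
  | .atom l _, _, .inr ⟨hne, hnfull, hsub⟩ => .inr ⟨hne, hnfull, (hW l).trans hsub⟩
  | .and _ _, ⟨hf, hg⟩, ⟨sf, sg⟩ =>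
      ⟨sat_of_subset_of_negFree hW hf sf, sat_of_subset_of_negFree hW hg sg⟩
  | .or _ _, ⟨hf, _⟩, .inl sf => .inl (sat_of_subset_of_negFree hW hf sf)
  | .or _ _, ⟨_, hg⟩, .inr sg => .inr (sat_of_subset_of_negFree hW hg sg)
  | .not _, hn, _ => hn.elim

lemma sat_congr_of_nonFluent {L : Type} {fluent : L → Prop} {W W' : L → Set ℝ}
    (hW : ∀ l, ¬ fluent l → W l = W' l) :
    ∀ {f : Formula L}, NonFluentFormula fluent f → (Sat W f ↔ Sat W' f)
  | .atom l _, hl => by simp only [Sat, hW l hl]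
  | .and _ _, ⟨hf, hg⟩ =>
      and_congr (sat_congr_of_nonFluent hW hf) (sat_congr_of_nonFluent hW hg)
  | .or _ _, ⟨hf, hg⟩ =>
      or_congr (sat_congr_of_nonFluent hW hf) (sat_congr_of_nonFluent hW hg)
  | .not _, hf => not_congr (sat_congr_of_nonFluent hW hf)

section Bound

variable {V L : Type} {E : V → V → Prop} {fluent : L → Prop} {NI NI' : NetI V L} {v : V}
  {r : Rule L}

lemma ELIG_congr_of_nonFluent (hagree : ∀ c l, ¬ fluent l → NI c l = NI' c l)
    (hgE : NonFluentFormula fluent r.gE) (hgN : NonFluentFormula fluent r.gN) :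
    ELIG E NI v r = ELIG E NI' v r := by
  ext
  exact and_congr_right fun _ =>
    and_congr (sat_congr_of_nonFluent (hagree _) hgN) (sat_congr_of_nonFluent (hagree _) hgE)

lemma QUAL_subset_of_subset (hsub : ∀ c l, NI c l ⊆ NI' c l)
    (hELIG : ELIG E NI' v r = ELIG E NI v r) (hh : NegFree r.h) :
    QUAL E NI' v r ⊆ QUAL E NI v r :=
  fun _ ⟨helig, hsat⟩ => ⟨hELIG ▸ helig, sat_of_subset_of_negFree (hsub _) hh hsat⟩

lemma BOUND_subset_of_subset [Finite V]
    (hifl : ∀ x x' y : ℕ, x < x' → r.ifl x' y ⊆ r.ifl x y)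
    (hagree : ∀ c l, ¬ fluent l → NI c l = NI' c l) (hsub : ∀ c l, NI c l ⊆ NI' c l)
    (hgE : NonFluentFormula fluent r.gE) (hgN : NonFluentFormula fluent r.gN)
    (hh : NegFree r.h) :
    BOUND E NI v r ⊆ BOUND E NI' v r := by
  have hELIG := ELIG_congr_of_nonFluent (E := E) (v := v) hagree hgE hgN
  have hcard : (QUAL E NI' v r).ncard ≤ (QUAL E NI v r).ncard :=
    Set.ncard_le_ncard (QUAL_subset_of_subset hsub hELIG.symm hh) (Set.toFinite _)
  unfold BOUND
  rw [hELIG]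
  rcases hcard.lt_or_eq with hlt | heq
  · exact hifl _ _ _ hlt
  · rw [heq]

end Bound

lemma mem_TTS_congr_of_nonFluent {V L : Type} {fluent : L → Prop} {I I' : Interp V L} {v : V}
    {r : Rule L} (hagree : ∀ t c l, ¬ fluent l → I t c l = I' t c l)
    (htc : NonFluentFormula fluent r.tc) {t : ℕ} :
    t ∈ TTS I v r ↔ t ∈ TTS I' v r :=
  sat_congr_of_nonFluent (hagree _ _) htc

theorem gamma_le_of_model_general {V L : Type} [Finite V]
    (E : V → V → Prop) (fluent : L → Prop) (P : Program V L)
    (hifl : ∀ r ∈ P.rules, ∀ x x' y : ℕ, x < x' → r.ifl x' y ⊆ r.ifl x y)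
    (htc : ∀ r ∈ P.rules, NonFluentFormula fluent r.tc)
    (hgE : ∀ r ∈ P.rules, NonFluentFormula fluent r.gE)
    (hgN : ∀ r ∈ P.rules, NonFluentFormula fluent r.gN)
    (hh : ∀ r ∈ P.rules, NegFree r.h)
    (hics : ∀ ic ∈ P.ics, NegFree ic.body)
    (I I' : Interp V L)
    (hagree : ∀ t c lab, ¬ fluent lab → I t c lab = I' t c lab)
    (hM : Models E P I) (hle : ile I' I) :
    ile (Gamma E P I') I := by
  intro t c lab
  refine Set.subset_inter (Set.subset_inter (Set.subset_inter (hle t c lab) ?_) ?_) ?_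
  · refine fun x hx => Set.mem_sInter.2 ?_
    rintro _ ⟨F, hF, rfl, rfl, h1, h2, rfl⟩
    exact hM.1 F hF t h1 h2 hx
  · refine fun x hx => Set.mem_sInter.2 ?_
    rintro _ ⟨ic, hic, rfl, hsat, rfl⟩
    exact hM.2.1 ic hic t c (sat_of_subset_of_negFree (hle t c) (hics ic hic) hsat) hx
  · refine fun x hx => Set.mem_sInter.2 ?_
    rintro _ ⟨r, hr, v, rfl, rfl, htts, rfl⟩
    have hbound := BOUND_subset_of_subset (E := E) (v := v) (hifl r hr) (hagree (t - r.dt))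
      (hle (t - r.dt)) (hgE r hr) (hgN r hr) (hh r hr)
    exact hbound (hM.2.2 r hr v t ((mem_TTS_congr_of_nonFluent hagree (htc r hr)).2 htts) hx)

/-- Lemma 1: if `I ⊨ P` and `I' ⊑ I` then `Γ_P(I') ⊑ I`.
Hypotheses from the framework: each rule's influence function satisfies the
monotonicity axiom; rule heads are fluent; the target and neighbor criteria
`tc, gE, gN` are non-fluent formulas; the qualifying formulas `h` and the
constraint bodies are negation-free; and `I, I'` agree on non-fluent labels
(non-fluent atoms are unchanged by rules). -/
theorem gamma_le_of_model {V L : Type} [Finite V]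
    (E : V → V → Prop) (fluent : L → Prop) (P : Program V L)
    (hifl : ∀ r ∈ P.rules, ∀ x x' y : ℕ, x < x' → r.ifl x' y ⊆ r.ifl x y)
    (hhead : ∀ r ∈ P.rules, fluent r.head)
    (htc : ∀ r ∈ P.rules, NonFluentFormula fluent r.tc)
    (hgE : ∀ r ∈ P.rules, NonFluentFormula fluent r.gE)
    (hgN : ∀ r ∈ P.rules, NonFluentFormula fluent r.gN)
    (hh : ∀ r ∈ P.rules, NegFree r.h)
    (hics : ∀ ic ∈ P.ics, NegFree ic.body)
    (I I' : Interp V L)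
    (hagree : ∀ t c lab, ¬ fluent lab → I t c lab = I' t c lab)
    (hM : Models E P I) (hle : ile I' I) :
    ile (Gamma E P I') I :=
  gamma_le_of_model_general E fluent P hifl htc hgE hgN hh hics I I' hagree hM hle
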